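/- Let S be an unambiguous E*-unitary inverse semigroup with zero. Then every finitely generated compatible order ideal of S is generated by a finite orthogonal set: for any finite compatible set {s₁,…,sₘ}, there is a finite pairwise-orthogonal set {t₁,…,tₙ} with the same generated order ideal. -/

import Mathlib

/-- An inverse semigroup with zero, equipped with its natural partial order:
`a ≤ b ↔ a = b * (a⁻¹ * a)`. -/
class InverseZeroSemigroup (S : Type*) extends Semigroup S, Zero S, Inv S, PartialOrder S where
  mul_inv_mul : ∀ a : S, a * a⁻¹ * a = a
  inv_mul_inv : ∀ a : S, a⁻¹ * a * a⁻¹ = a⁻¹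
  idem_comm : ∀ e f : S, e * e = e → f * f = f → e * f = f * e
  zero_mul : ∀ a : S, (0 : S) * a = 0
  mul_zero : ∀ a : S, a * (0 : S) = 0
  le_iff : ∀ a b : S, a ≤ b ↔ a = b * (a⁻¹ * a)

variable {S : Type*} [InverseZeroSemigroup S]

/-- `s` and `t` are compatible if `s⁻¹t` and `st⁻¹` are idempotents. -/
def Compatible (s t : S) : Prop :=
  (s⁻¹ * t) * (s⁻¹ * t) = s⁻¹ * t ∧ (s * t⁻¹) * (s * t⁻¹) = s * t⁻¹

/-- `s` and `t` are orthogonal if `s⁻¹t = 0 = st⁻¹`. -/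
def Orthogonal (s t : S) : Prop := s⁻¹ * t = 0 ∧ s * t⁻¹ = 0

/-!
Take the maximal elements of `A`. As `A` is finite, every element of `A` lies below one of them,
so they generate the same order ideal. Two distinct maximal elements `s`, `t` are orthogonal:
otherwise compatibility forces the domain idempotents `s⁻¹s` and `t⁻¹t` to have nonzero product,
so by unambiguity they are comparable, say `s⁻¹s ≤ t⁻¹t`; then `s = (st⁻¹)t ≤ t` because `st⁻¹`
is idempotent, contradicting maximality.
-/

theorem Finset.lowerClosure_filter_maximal {α : Type*} [Preorder α] (A : Finset α)
    [DecidablePred (Maximal (· ∈ A))] :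
    lowerClosure (↑(A.filter (Maximal (· ∈ A))) : Set α) = lowerClosure ↑A := by
  refine le_antisymm (lowerClosure_mono (Finset.coe_subset.2 (A.filter_subset _)))
    (lowerClosure_le.2 fun x hx => ?_)
  obtain ⟨y, hxy, hy⟩ := A.exists_le_maximal hx
  exact ⟨y, Finset.mem_filter.2 ⟨hy.prop, hy⟩, hxy⟩

namespace InverseZeroSemigroup

theorem isIdempotentElem_inv_mul (a : S) : IsIdempotentElem (a⁻¹ * a) := by
  rw [IsIdempotentElem, ← mul_assoc, inv_mul_inv]

theorem isIdempotentElem_mul_inv (a : S) : IsIdempotentElem (a * a⁻¹) := by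
  rw [IsIdempotentElem, ← mul_assoc, mul_inv_mul]

theorem eq_inv_of_mul_mul {a x : S} (hax : a * x * a = a) (hxa : x * a * x = x) :
    x = a⁻¹ := by
  have hax' : IsIdempotentElem (a * x) := by
    rw [IsIdempotentElem, ← mul_assoc, hax]
  have hxa' : IsIdempotentElem (x * a) := by
    rw [IsIdempotentElem, ← mul_assoc, hxa]
  have h₁ := idem_comm _ _ (isIdempotentElem_mul_inv a) hax'
  have h₂ := idem_comm _ _ hxa' (isIdempotentElem_inv_mul a)
  calc x = x * (a * a⁻¹ * a) * x := by rw [mul_inv_mul, hxa]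
    _ = x * ((a * a⁻¹) * (a * x)) := by simp only [mul_assoc]
    _ = (x * a * x) * a * a⁻¹ := by rw [h₁]; simp only [mul_assoc]
    _ = x * (a * a⁻¹ * a) * a⁻¹ := by rw [hxa, mul_inv_mul]
    _ = (x * a) * (a⁻¹ * a) * a⁻¹ := by simp only [mul_assoc]
    _ = a⁻¹ * (a * x * a) * a⁻¹ := by rw [h₂]; simp only [mul_assoc]
    _ = a⁻¹ := by rw [hax, inv_mul_inv]

theorem inv_inv (a : S) : a⁻¹⁻¹ = a :=
  (eq_inv_of_mul_mul (inv_mul_inv a) (mul_inv_mul a)).symm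

theorem _root_.IsIdempotentElem.inv_eq {e : S} (he : IsIdempotentElem e) : e⁻¹ = e :=
  (eq_inv_of_mul_mul (by rw [he, he]) (by rw [he, he])).symm

theorem mul_inv_rev (a b : S) : (a * b)⁻¹ = b⁻¹ * a⁻¹ := by
  have h := idem_comm _ _ (isIdempotentElem_mul_inv b) (isIdempotentElem_inv_mul a)
  refine (eq_inv_of_mul_mul ?_ ?_).symm
  · calc a * b * (b⁻¹ * a⁻¹) * (a * b) = a * ((b * b⁻¹) * (a⁻¹ * a)) * b := by
          simp only [mul_assoc]
      _ = (a * a⁻¹ * a) * (b * b⁻¹ * b) := by rw [h]; simp only [mul_assoc]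
      _ = a * b := by rw [mul_inv_mul, mul_inv_mul]
  · calc b⁻¹ * a⁻¹ * (a * b) * (b⁻¹ * a⁻¹) = b⁻¹ * ((a⁻¹ * a) * (b * b⁻¹)) * a⁻¹ := by
          simp only [mul_assoc]
      _ = (b⁻¹ * b * b⁻¹) * (a⁻¹ * a * a⁻¹) := by rw [← h]; simp only [mul_assoc]
      _ = b⁻¹ * a⁻¹ := by rw [inv_mul_inv, inv_mul_inv]

theorem mul_le_of_isIdempotentElem {e : S} (he : IsIdempotentElem e) (a : S) : e * a ≤ a := by
  have h := idem_comm _ _ (isIdempotentElem_mul_inv a) he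
  rw [le_iff, mul_inv_rev, he.inv_eq]
  calc e * a = e * (a * a⁻¹ * a) := by rw [mul_inv_mul]
    _ = e * (a * a⁻¹) * a := by simp only [mul_assoc]
    _ = a * a⁻¹ * (e * e) * a := by rw [← h, he]
    _ = a * (a⁻¹ * e * (e * a)) := by simp only [mul_assoc]

theorem eq_mul_of_isIdempotentElem_of_le {e f : S} (he : IsIdempotentElem e) (h : e ≤ f) :
    e = f * e := by
  rwa [le_iff, he.inv_eq, he] at h

variable {s t : S}

theorem _root_.Compatible.symm (h : Compatible s t) : Compatible t s := by
  have h₁ : t⁻¹ * s = s⁻¹ * t := by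
    rw [← IsIdempotentElem.inv_eq h.1, mul_inv_rev, inv_inv]
  have h₂ : t * s⁻¹ = s * t⁻¹ := by
    rw [← IsIdempotentElem.inv_eq h.2, mul_inv_rev, inv_inv]
  exact ⟨h₁ ▸ h.1, h₂ ▸ h.2⟩

theorem _root_.Compatible.le_of_inv_mul_le (h : Compatible s t) (hd : s⁻¹ * s ≤ t⁻¹ * t) :
    s ≤ t := by
  have hd' := eq_mul_of_isIdempotentElem_of_le (isIdempotentElem_inv_mul s) hd
  have hc := idem_comm _ _ (isIdempotentElem_inv_mul t) (isIdempotentElem_inv_mul s)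
  calc s = s * (s⁻¹ * s) := by rw [← mul_assoc, mul_inv_mul]
    _ = (s * s⁻¹ * s) * t⁻¹ * t := by rw [hd', hc]; simp only [mul_assoc]
    _ = (s * t⁻¹) * t := by rw [mul_inv_mul]
    _ ≤ t := mul_le_of_isIdempotentElem h.2 t

theorem _root_.Compatible.inv_mul_mul_inv_mul_ne_zero (h : Compatible s t)
    (hno : ¬ Orthogonal s t) : s⁻¹ * s * (t⁻¹ * t) ≠ 0 := by
  intro h0
  have hc := idem_comm _ _ h.1 (isIdempotentElem_inv_mul t)
  refine hno ⟨?_, ?_⟩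
  · calc s⁻¹ * t = (s⁻¹ * s * s⁻¹) * (t * t⁻¹ * t) := by
          rw [inv_mul_inv, mul_inv_mul]
      _ = s⁻¹ * s * ((s⁻¹ * t) * (t⁻¹ * t)) := by simp only [mul_assoc]
      _ = 0 := by rw [hc, ← mul_assoc, h0, zero_mul]
  · calc s * t⁻¹ = (s * s⁻¹ * s) * (t⁻¹ * t * t⁻¹) := by
          rw [inv_mul_inv, mul_inv_mul]
      _ = s * (s⁻¹ * s * (t⁻¹ * t)) * t⁻¹ := by simp only [mul_assoc]
      _ = 0 := by rw [h0, mul_zero, zero_mul]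

theorem _root_.Compatible.le_or_le_of_not_orthogonal
    (hU : ∀ e f : S, e * e = e → f * f = f → e ≠ 0 → f ≠ 0 → e * f ≠ 0 → e ≤ f ∨ f ≤ e)
    (h : Compatible s t) (hno : ¬ Orthogonal s t) : s ≤ t ∨ t ≤ s := by
  have hst := h.inv_mul_mul_inv_mul_ne_zero hno
  have hs : s⁻¹ * s ≠ 0 := fun h0 => hst (by rw [h0, zero_mul])
  have ht : t⁻¹ * t ≠ 0 := fun h0 => hst (by rw [h0, mul_zero])
  exact (hU _ _ (isIdempotentElem_inv_mul s) (isIdempotentElem_inv_mul t) hs ht hst).imp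
    h.le_of_inv_mul_le h.symm.le_of_inv_mul_le

end InverseZeroSemigroup

theorem compatible_ideal_orthogonal_generated_general
    (hU : ∀ e f : S, e * e = e → f * f = f → e ≠ 0 → f ≠ 0 → e * f ≠ 0 →
      e ≤ f ∨ f ≤ e)
    (A : Finset S) (hA : (↑A : Set S).Pairwise Compatible) :
    ∃ B : Finset S, (↑B : Set S).Pairwise Orthogonal ∧
      {y : S | ∃ x ∈ A, y ≤ x} = {y : S | ∃ x ∈ B, y ≤ x} := by
  classical
  refine ⟨A.filter (Maximal (· ∈ A)), fun s hs t ht hst => ?_,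
    congrArg SetLike.coe (A.lowerClosure_filter_maximal).symm⟩
  replace hs := (Finset.mem_filter.1 hs).2
  replace ht := (Finset.mem_filter.1 ht).2
  by_contra hno
  rcases (hA hs.prop ht.prop hst).le_or_le_of_not_orthogonal hU hno with hle | hle
  exacts [hst (hs.eq_of_le ht.prop hle), hst (ht.eq_of_ge hs.prop hle)]

/-- In an unambiguous `E*`-unitary inverse semigroup with zero, every
finitely generated compatible order ideal is generated by a finite orthogonal
set. -/
theorem compatible_ideal_orthogonal_generated
    (hE : ∀ e s : S, e ≠ 0 → e * e = e → e ≤ s → s * s = s)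
    (hU : ∀ e f : S, e * e = e → f * f = f → e ≠ 0 → f ≠ 0 → e * f ≠ 0 →
      e ≤ f ∨ f ≤ e)
    (A : Finset S) (hA : (↑A : Set S).Pairwise Compatible) :
    ∃ B : Finset S, (↑B : Set S).Pairwise Orthogonal ∧
      {y : S | ∃ x ∈ A, y ≤ x} = {y : S | ∃ x ∈ B, y ≤ x} :=
  compatible_ideal_orthogonal_generated_general hU A hA
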